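/- arXiv:2307.00419 — 3 statements merged into one kernel-verified Lean document; each statement's English description precedes it below -/
import Mathlib

section
/- Let X₁, X₂ be real Banach spaces and X = X₁ × X₂ with norm ‖(x,y)‖ = (‖x‖² + ‖y‖²)^{1/2}. Let A₁ : X₁ → X₁ be a bounded linear operator with ‖exp(−sA₁)‖ ≤ 1 for all s ≥ 0 and B₁ : X₂ → X₁ a bounded linear operator. Define the split-step operator T₁(τ) : X → X by T₁(τ)(x,y) = (exp(−τA₁)x + (∫₀^τ exp(−σA₁) dσ)(B₁ y), y). Then for all τ ≥ 0, the operator norm satisfies ‖T₁(τ)‖ ≤ 1 + τ‖B₁‖. -/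
noncomputable section

open scoped Topology

variable {X₁ X₂ : Type*} [NormedAddCommGroup X₁] [NormedSpace ℝ X₁] [CompleteSpace X₁]
  [NormedAddCommGroup X₂] [NormedSpace ℝ X₂] [CompleteSpace X₂]

/-- The operator exponential `exp (-τ A)` of a bounded operator `A`. -/
def expOp {X : Type*} [NormedAddCommGroup X] [NormedSpace ℝ X] [CompleteSpace X]
    (A : X →L[ℝ] X) (τ : ℝ) : X →L[ℝ] X :=
  NormedSpace.exp (-(τ • A))

/-- The coupling operator `X(τ) = (∫₀^τ exp(-σ A) dσ) ∘ B`. -/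
def Xop {X Y : Type*} [NormedAddCommGroup X] [NormedSpace ℝ X] [CompleteSpace X]
    [NormedAddCommGroup Y] [NormedSpace ℝ Y] (A : X →L[ℝ] X) (B : Y →L[ℝ] X) (τ : ℝ) :
    Y →L[ℝ] X :=
  (∫ σ in (0:ℝ)..τ, expOp A σ).comp B

/-- Lift of a block operator on `X₁ × X₂` to the `ℓ²`-product space
`X = X₁ × X₂` with norm `‖(x,y)‖ = (‖x‖² + ‖y‖²)^(1/2)`. -/
def toL2 (M : (X₁ × X₂) →L[ℝ] (X₁ × X₂)) :
    WithLp 2 (X₁ × X₂) →L[ℝ] WithLp 2 (X₁ × X₂) :=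
  ((WithLp.prodContinuousLinearEquiv 2 ℝ X₁ X₂).symm.toContinuousLinearMap.comp M).comp
    (WithLp.prodContinuousLinearEquiv 2 ℝ X₁ X₂).toContinuousLinearMap

/-- The split-step operator `T₁(τ)(x,y) = (exp(-τA₁)x + X₁(τ)y, y)`. -/
def T1 (A₁ : X₁ →L[ℝ] X₁) (B₁ : X₂ →L[ℝ] X₁) (τ : ℝ) :
    WithLp 2 (X₁ × X₂) →L[ℝ] WithLp 2 (X₁ × X₂) :=
  toL2 (((expOp A₁ τ).coprod (Xop A₁ B₁ τ)).prod (ContinuousLinearMap.snd ℝ X₁ X₂))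

/-- The split-step operator `T₂(τ)(x,y) = (x, X₂(τ)x + exp(-τA₂)y)`. -/
def T2 (A₂ : X₂ →L[ℝ] X₂) (B₂ : X₁ →L[ℝ] X₂) (τ : ℝ) :
    WithLp 2 (X₁ × X₂) →L[ℝ] WithLp 2 (X₁ × X₂) :=
  toL2 ((ContinuousLinearMap.fst ℝ X₁ X₂).prod ((Xop A₂ B₂ τ).coprod (expOp A₂ τ)))

/-- The split-step approximation operator `T(τ) = T₂(τ) ∘ T₁(τ)`. -/
def Tfull (A₁ : X₁ →L[ℝ] X₁) (A₂ : X₂ →L[ℝ] X₂) (B₁ : X₂ →L[ℝ] X₁) (B₂ : X₁ →L[ℝ] X₂)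
    (τ : ℝ) : WithLp 2 (X₁ × X₂) →L[ℝ] WithLp 2 (X₁ × X₂) :=
  (T2 A₂ B₂ τ).comp (T1 A₁ B₁ τ)

/-- The full operator `𝓒(x,y) = (A₁x - B₁y, A₂y - B₂x)`. -/
def opC (A₁ : X₁ →L[ℝ] X₁) (A₂ : X₂ →L[ℝ] X₂) (B₁ : X₂ →L[ℝ] X₁) (B₂ : X₁ →L[ℝ] X₂) :
    WithLp 2 (X₁ × X₂) →L[ℝ] WithLp 2 (X₁ × X₂) :=
  toL2 ((A₁.coprod (-B₁)).prod ((-B₂).coprod A₂))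

/-- The diagonal operator `𝓐(x,y) = (A₁x, A₂y)`. -/
def opA (A₁ : X₁ →L[ℝ] X₁) (A₂ : X₂ →L[ℝ] X₂) :
    WithLp 2 (X₁ × X₂) →L[ℝ] WithLp 2 (X₁ × X₂) :=
  toL2 (A₁.prodMap A₂)

/-- The off-diagonal coupling operator `𝓑(x,y) = (B₁y, B₂x)`. -/
def opB (B₁ : X₂ →L[ℝ] X₁) (B₂ : X₁ →L[ℝ] X₂) :
    WithLp 2 (X₁ × X₂) →L[ℝ] WithLp 2 (X₁ × X₂) :=
  toL2 (((0 : X₁ →L[ℝ] X₁).coprod B₁).prod (B₂.coprod (0 : X₂ →L[ℝ] X₂)))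

/-! `T₁(τ)(x, y)` is the sum of `(exp(-τA₁)x, y)`, whose `ℓ²`-norm is at most `‖(x, y)‖` because
`exp(-τA₁)` is a contraction, and of `(X₁(τ)y, 0)`, whose norm is at most `τ‖B₁‖‖y‖` because the
integrand defining `X₁(τ)` has norm at most `1`. -/

theorem WithLp.prod_norm_le_of_L2 {α β : Type*} [SeminormedAddCommGroup α]
    [SeminormedAddCommGroup β] {v w : WithLp 2 (α × β)} (hfst : ‖v.fst‖ ≤ ‖w.fst‖)
    (hsnd : ‖v.snd‖ ≤ ‖w.snd‖) : ‖v‖ ≤ ‖w‖ := by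
  rw [WithLp.prod_norm_eq_of_L2, WithLp.prod_norm_eq_of_L2]
  gcongr

theorem norm_Xop_le {X Y : Type*} [NormedAddCommGroup X] [NormedSpace ℝ X] [CompleteSpace X]
    [NormedAddCommGroup Y] [NormedSpace ℝ Y] (A : X →L[ℝ] X) (B : Y →L[ℝ] X)
    (hA : ∀ s : ℝ, 0 ≤ s → ‖expOp A s‖ ≤ 1) {τ : ℝ} (hτ : 0 ≤ τ) :
    ‖Xop A B τ‖ ≤ τ * ‖B‖ := by
  have hint : ‖∫ σ in (0:ℝ)..τ, expOp A σ‖ ≤ 1 * |τ - 0| :=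
    intervalIntegral.norm_integral_le_of_norm_le_const fun s hs =>
      hA s (Set.uIoc_of_le hτ ▸ hs).1.le
  rw [one_mul, sub_zero, abs_of_nonneg hτ] at hint
  exact (ContinuousLinearMap.opNorm_comp_le _ _).trans (by gcongr)

theorem norm_toL2_coprod_prod_snd_le {E F : Type*} [NormedAddCommGroup E] [NormedSpace ℝ E]
    [NormedAddCommGroup F] [NormedSpace ℝ F] (P : E →L[ℝ] E) (Q : F →L[ℝ] E) (hP : ‖P‖ ≤ 1) :
    ‖toL2 ((P.coprod Q).prod (ContinuousLinearMap.snd ℝ E F))‖ ≤ 1 + ‖Q‖ := by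
  refine ContinuousLinearMap.opNorm_le_bound _ (by positivity) fun v => ?_
  have hsplit : toL2 ((P.coprod Q).prod (ContinuousLinearMap.snd ℝ E F)) v =
      WithLp.toLp 2 (P v.fst, v.snd) + WithLp.toLp 2 (Q v.snd, (0 : F)) := by
    rw [← WithLp.toLp_add, Prod.mk_add_mk, add_zero]
    rfl
  have hdiag : ‖WithLp.toLp 2 (P v.fst, v.snd)‖ ≤ ‖v‖ :=
    WithLp.prod_norm_le_of_L2 ((P.le_of_opNorm_le hP v.fst).trans_eq (one_mul _)) le_rfl
  have hcoupling : ‖WithLp.toLp 2 (Q v.snd, (0 : F))‖ ≤ ‖Q‖ * ‖v‖ := by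
    rw [WithLp.norm_toLp_fst]
    exact (Q.le_opNorm _).trans (by gcongr; exact WithLp.norm_snd_le (x := v))
  calc ‖toL2 ((P.coprod Q).prod (ContinuousLinearMap.snd ℝ E F)) v‖
      ≤ ‖WithLp.toLp 2 (P v.fst, v.snd)‖ + ‖WithLp.toLp 2 (Q v.snd, (0 : F))‖ :=
        hsplit ▸ norm_add_le _ _
    _ ≤ ‖v‖ + ‖Q‖ * ‖v‖ := add_le_add hdiag hcoupling
    _ = (1 + ‖Q‖) * ‖v‖ := by ring

/-- If the exponentials `exp(-sA₁)` are contractions, then the split-step operator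
`T₁(τ)(x,y) = (exp(-τA₁)x + X₁(τ)y, y)` satisfies `‖T₁(τ)‖ ≤ 1 + τ‖B₁‖`. -/
theorem T1_norm_le (A₁ : X₁ →L[ℝ] X₁) (B₁ : X₂ →L[ℝ] X₁)
    (hA₁ : ∀ s : ℝ, 0 ≤ s → ‖expOp A₁ s‖ ≤ 1) :
    ∀ τ : ℝ, 0 ≤ τ → ‖T1 (X₂ := X₂) A₁ B₁ τ‖ ≤ 1 + τ * ‖B₁‖ := by
  intro τ hτ
  calc ‖T1 A₁ B₁ τ‖ ≤ 1 + ‖Xop A₁ B₁ τ‖ := norm_toL2_coprod_prod_snd_le _ _ (hA₁ τ hτ)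
    _ ≤ 1 + τ * ‖B₁‖ := by gcongr; exact norm_Xop_le A₁ B₁ hA₁ hτ
end
end

section
/- Let X₁, X₂ be real Banach spaces and X = X₁ × X₂ with norm ‖(x,y)‖ = (‖x‖² + ‖y‖²)^{1/2}. Let A₁ : X₁ → X₁, A₂ : X₂ → X₂, B₁ : X₂ → X₁, B₂ : X₁ → X₂ be bounded linear operators. Define E_j(τ) = exp(−τA_j), X_j(τ) = (∫₀^τ exp(−σA_j) dσ) ∘ B_j, T₁(τ)(x,y) = (E₁(τ)x + X₁(τ)y, y), T₂(τ)(x,y) = (x, X₂(τ)x + E₂(τ)y), T(τ) = T₂(τ) ∘ T₁(τ), and 𝓒(x,y) = (A₁x − B₁y, A₂y − B₂x). Then for every (u,v) ∈ X, (1/t)(T(t)(u,v) − (u,v)) converges to −𝓒(u,v) as t → 0⁺. -/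
/-!
The map `t ↦ T(t) P` is differentiable at `0`, and `T(0) = 1`, so the difference quotient
converges to `(d/dt) T(t) P |_{t=0}`. Since `E_j(0) = 1`, `X_j(0) = 0`, `E_j'(0) = -A_j` and
`X_j'(0) = B_j` (fundamental theorem of calculus), the product rule for `T₂(t) ∘ T₁(t)` gives
the derivative `(B₁v - A₁u, B₂u - A₂v) = -𝓒(u,v)`.
-/

noncomputable section

open scoped Topology

variable {X₁ X₂ : Type*} [NormedAddCommGroup X₁] [NormedSpace ℝ X₁] [CompleteSpace X₁]
  [NormedAddCommGroup X₂] [NormedSpace ℝ X₂] [CompleteSpace X₂]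

section

variable {X : Type*} [NormedAddCommGroup X] [NormedSpace ℝ X] [CompleteSpace X]

@[simp]
lemma expOp_zero (A : X →L[ℝ] X) : expOp A 0 = 1 := by
  simp [expOp]

lemma hasDerivAt_expOp (A : X →L[ℝ] X) (t : ℝ) :
    HasDerivAt (expOp A) (expOp A t * -A) t := by
  have h : expOp A = fun s : ℝ => NormedSpace.exp (s • -A) := by
    funext s; simp [expOp]
  rw [h]
  exact hasDerivAt_exp_smul_const (-A) t

lemma continuous_expOp (A : X →L[ℝ] X) : Continuous (expOp A) :=
  continuous_iff_continuousAt.2 fun t => (hasDerivAt_expOp A t).continuousAt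

variable {Y : Type*} [NormedAddCommGroup Y] [NormedSpace ℝ Y]

@[simp]
lemma Xop_zero (A : X →L[ℝ] X) (B : Y →L[ℝ] X) : Xop A B 0 = 0 := by
  simp [Xop]

lemma hasDerivAt_Xop (A : X →L[ℝ] X) (B : Y →L[ℝ] X) (t : ℝ) :
    HasDerivAt (Xop A B) ((expOp A t).comp B) t :=
  (((continuous_expOp A).integral_hasStrictDerivAt 0 t).hasDerivAt.clm_comp
    (hasDerivAt_const t B)).congr_deriv (by simp)

end

section

variable {𝕜 : Type*} [NontriviallyNormedField 𝕜] {p : ENNReal} [Fact (1 ≤ p)]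
  {E F : Type*} [NormedAddCommGroup E] [NormedSpace 𝕜 E] [NormedAddCommGroup F] [NormedSpace 𝕜 F]

lemma HasDerivAt.toLp_prodMk {f : 𝕜 → E} {g : 𝕜 → F} {f' : E} {g' : F} {t : 𝕜}
    (hf : HasDerivAt f f' t) (hg : HasDerivAt g g' t) :
    HasDerivAt (fun s => WithLp.toLp p (f s, g s)) (WithLp.toLp p (f', g')) t :=
  (WithLp.prodContinuousLinearEquiv p 𝕜 E F).symm.hasFDerivAt.comp_hasDerivAt t (hf.prodMk hg)

end

lemma opC_apply {E₁ E₂ : Type*} [NormedAddCommGroup E₁] [NormedSpace ℝ E₁]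
    [NormedAddCommGroup E₂] [NormedSpace ℝ E₂] (A₁ : E₁ →L[ℝ] E₁) (A₂ : E₂ →L[ℝ] E₂)
    (B₁ : E₂ →L[ℝ] E₁) (B₂ : E₁ →L[ℝ] E₂) (P : WithLp 2 (E₁ × E₂)) :
    opC A₁ A₂ B₁ B₂ P = WithLp.toLp 2 (A₁ P.fst - B₁ P.snd, A₂ P.snd - B₂ P.fst) := by
  simp [opC, toL2, sub_eq_add_neg, add_comm]

lemma Tfull_apply (A₁ : X₁ →L[ℝ] X₁) (A₂ : X₂ →L[ℝ] X₂) (B₁ : X₂ →L[ℝ] X₁)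
    (B₂ : X₁ →L[ℝ] X₂) (t : ℝ) (P : WithLp 2 (X₁ × X₂)) :
    Tfull A₁ A₂ B₁ B₂ t P =
      let x := expOp A₁ t P.fst + Xop A₁ B₁ t P.snd
      WithLp.toLp 2 (x, Xop A₂ B₂ t x + expOp A₂ t P.snd) :=
  rfl

@[simp]
lemma Tfull_zero (A₁ : X₁ →L[ℝ] X₁) (A₂ : X₂ →L[ℝ] X₂) (B₁ : X₂ →L[ℝ] X₁)
    (B₂ : X₁ →L[ℝ] X₂) (P : WithLp 2 (X₁ × X₂)) : Tfull A₁ A₂ B₁ B₂ 0 P = P := by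
  simp [Tfull_apply, WithLp.ext_iff, Prod.ext_iff]

lemma hasDerivAt_Tfull_apply_zero (A₁ : X₁ →L[ℝ] X₁) (A₂ : X₂ →L[ℝ] X₂) (B₁ : X₂ →L[ℝ] X₁)
    (B₂ : X₁ →L[ℝ] X₂) (P : WithLp 2 (X₁ × X₂)) :
    HasDerivAt (fun t => Tfull A₁ A₂ B₁ B₂ t P) (-opC A₁ A₂ B₁ B₂ P) 0 := by
  set x := fun t => expOp A₁ t P.fst + Xop A₁ B₁ t P.snd
  have hx : HasDerivAt x (B₁ P.snd - A₁ P.fst) 0 := by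
    refine (((hasDerivAt_expOp A₁ 0).clm_apply (hasDerivAt_const 0 P.fst)).add
      ((hasDerivAt_Xop A₁ B₁ 0).clm_apply (hasDerivAt_const 0 P.snd))).congr_deriv ?_
    simp [sub_eq_neg_add]
  have hy : HasDerivAt (fun t => Xop A₂ B₂ t (x t) + expOp A₂ t P.snd)
      (B₂ P.fst - A₂ P.snd) 0 := by
    refine (((hasDerivAt_Xop A₂ B₂ 0).clm_apply hx).add
      ((hasDerivAt_expOp A₂ 0).clm_apply (hasDerivAt_const 0 P.snd))).congr_deriv ?_
    simp [x, sub_eq_add_neg]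
  refine (hx.toLp_prodMk hy).congr_deriv ?_
  simp [opC_apply, WithLp.ext_iff]

/-- The split-step operators `T(t)` have derivative `-𝓒` at `t = 0⁺` in the strong sense:
for every `(u,v) ∈ X`, `(1/t)(T(t)(u,v) - (u,v)) → -𝓒(u,v)` as `t → 0⁺`. -/
theorem Tfull_derivative_at_zero (A₁ : X₁ →L[ℝ] X₁) (A₂ : X₂ →L[ℝ] X₂)
    (B₁ : X₂ →L[ℝ] X₁) (B₂ : X₁ →L[ℝ] X₂) (P : WithLp 2 (X₁ × X₂)) :
    Filter.Tendsto (fun t : ℝ => (1 / t) • (Tfull A₁ A₂ B₁ B₂ t P - P))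
      (𝓝[>] 0) (𝓝 (-(opC A₁ A₂ B₁ B₂ P))) := by
  simpa using (hasDerivAt_Tfull_apply_zero A₁ A₂ B₁ B₂ P).tendsto_slope_zero_right
end
end

section
/- For every real number x ≥ 0 and every natural number n, the operator norm of the n-th power of the 2×2 real matrix P(x) = [[1, x], [x, 1 + x²]], regarded as a linear map on the Euclidean space ℝ², satisfies ‖P(x)ⁿ‖ ≥ (1 + (x/2)(x + √(4 + x²)))ⁿ ≥ 1 + n·x. In particular, for β ∈ (0,1], t > 0 and x = (t/n)^{1−β}, the powers P(x)ⁿ satisfy ‖P(x)ⁿ‖ ≥ n^β t^{1−β}, so they are not uniformly bounded in n. -/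
noncomputable section

/-- The matrix `P(x) = [[1, x], [x, 1 + x²]]`. -/
def Pmat (x : ℝ) : Matrix (Fin 2) (Fin 2) ℝ := !![1, x; x, 1 + x ^ 2]

/-- `P(x)` as a continuous linear map on the Euclidean space `ℝ²`. -/
def PCLM (x : ℝ) : EuclideanSpace ℝ (Fin 2) →L[ℝ] EuclideanSpace ℝ (Fin 2) :=
  Matrix.toEuclideanCLM (𝕜 := ℝ) (Pmat x)

/-!
`((√(4 + x²) - x)/2, 1)` is an eigenvector of `P(x)` for `λ(x) = 1 + (x/2)(x + √(4 + x²))`, so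
`λ(x)ⁿ ≤ ‖P(x)ⁿ‖`, and `λ(x) ≥ 1 + x` gives `λ(x)ⁿ ≥ 1 + n x` by Bernoulli's inequality. For
`x = (t/n)^(1-β)` the product `n x` equals `n^β t^(1-β)`.
-/

open Real Matrix

namespace ContinuousLinearMap

variable {𝕜 E : Type*} [NontriviallyNormedField 𝕜] [NormedAddCommGroup E] [NormedSpace 𝕜 E]

theorem pow_apply_of_apply_eq_smul {f : E →L[𝕜] E} {c : 𝕜} {v : E} (hf : f v = c • v) (n : ℕ) :
    (f ^ n) v = c ^ n • v := by
  induction n with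
  | zero => simp
  | succ n ih => rw [pow_succ', mul_apply_eq_comp, ih, map_smul, hf, smul_smul, pow_succ]

theorem norm_pow_le_opNorm_pow_of_apply_eq_smul {f : E →L[𝕜] E} {c : 𝕜} {v : E} (hv : v ≠ 0)
    (hf : f v = c • v) (n : ℕ) : ‖c‖ ^ n ≤ ‖f ^ n‖ := by
  have hle : ‖c‖ ^ n * ‖v‖ ≤ ‖f ^ n‖ * ‖v‖ := by
    simpa [pow_apply_of_apply_eq_smul hf, norm_smul] using (f ^ n).le_opNorm v
  exact le_of_mul_le_mul_right hle (norm_pos_iff.mpr hv)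

end ContinuousLinearMap

theorem Pmat_mulVec_eigenvector (x : ℝ) :
    Pmat x *ᵥ ![(-x + √(4 + x ^ 2)) / 2, 1] =
      (1 + x / 2 * (x + √(4 + x ^ 2))) • ![(-x + √(4 + x ^ 2)) / 2, 1] := by
  ext i
  fin_cases i
  · have hs : √(4 + x ^ 2) ^ 2 = 4 + x ^ 2 := sq_sqrt (by positivity)
    simp [Pmat]
    linear_combination (-x / 4) * hs
  · simp [Pmat]
    ring

theorem Pmat_eigenvalue_pow_le_norm_PCLM_pow (x : ℝ) (n : ℕ) :
    (1 + x / 2 * (x + √(4 + x ^ 2))) ^ n ≤ ‖PCLM x ^ n‖ := by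
  have hv : WithLp.toLp 2 ![(-x + √(4 + x ^ 2)) / 2, 1] ≠ (0 : EuclideanSpace ℝ (Fin 2)) := by
    intro h
    simpa using congrArg (· 1) h
  have heig := ContinuousLinearMap.norm_pow_le_opNorm_pow_of_apply_eq_smul (f := PCLM x) hv
    (by rw [PCLM, toEuclideanCLM_toLp, Pmat_mulVec_eigenvector, WithLp.toLp_smul]) n
  rw [norm_eq_abs, ← abs_pow] at heig
  exact (le_abs_self _).trans heig

theorem one_add_mul_le_Pmat_eigenvalue_pow {x : ℝ} (hx : 0 ≤ x) (n : ℕ) :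
    1 + n * x ≤ (1 + x / 2 * (x + √(4 + x ^ 2))) ^ n := by
  have hs : 2 ≤ √(4 + x ^ 2) := le_sqrt_of_sq_le (by nlinarith)
  calc 1 + n * x ≤ (1 + x) ^ n := one_add_mul_le_pow (by linarith) n
    _ ≤ _ := pow_le_pow_left₀ (by linarith) (by nlinarith) n

theorem Real.mul_div_rpow_one_sub {a b : ℝ} (ha : 0 < a) (hb : 0 ≤ b) (β : ℝ) :
    a * (b / a) ^ (1 - β) = a ^ β * b ^ (1 - β) := by
  have hsplit : a = a ^ β * a ^ (1 - β) := by rw [← rpow_add ha, add_sub_cancel, rpow_one]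
  rw [div_rpow hb ha.le]
  nth_rw 1 [hsplit]
  field_simp

/-- The powers of `P(x)` satisfy `‖P(x)ⁿ‖ ≥ (1 + (x/2)(x + √(4 + x²)))ⁿ ≥ 1 + n·x`; in
particular, for `β ∈ (0,1]`, `t > 0` and `x = (t/n)^(1-β)`, one has
`‖P(x)ⁿ‖ ≥ n^β · t^(1-β)`, so the powers are not uniformly bounded in `n`. -/
theorem Pmat_pow_norm_unbounded :
    (∀ x : ℝ, 0 ≤ x → ∀ n : ℕ,
      (1 + x / 2 * (x + Real.sqrt (4 + x ^ 2))) ^ n ≤ ‖(PCLM x) ^ n‖ ∧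
      1 + (n : ℝ) * x ≤ (1 + x / 2 * (x + Real.sqrt (4 + x ^ 2))) ^ n) ∧
    (∀ β : ℝ, β ∈ Set.Ioc (0 : ℝ) 1 → ∀ t : ℝ, 0 < t → ∀ n : ℕ, 1 ≤ n →
      (n : ℝ) ^ β * t ^ (1 - β) ≤ ‖(PCLM ((t / n) ^ (1 - β))) ^ n‖) := by
  refine ⟨fun x hx n ↦ ⟨Pmat_eigenvalue_pow_le_norm_PCLM_pow x n,
    one_add_mul_le_Pmat_eigenvalue_pow hx n⟩, fun β _ t ht n hn ↦ ?_⟩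
  have hn0 : (0 : ℝ) < n := by exact_mod_cast hn
  have hx : 0 ≤ (t / n) ^ (1 - β) := by positivity
  rw [← Real.mul_div_rpow_one_sub hn0 ht.le]
  linarith [one_add_mul_le_Pmat_eigenvalue_pow hx n,
    Pmat_eigenvalue_pow_le_norm_PCLM_pow ((t / n) ^ (1 - β)) n]
end
end
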